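/- Let (X_i, Y_{i1}, Y_{i2}), i = 1,...,n, be i.i.d. copies of a triple (X, Y_1, Y_2) satisfying condition (G1), and for j ∈ {1,2} let F̂_{n,j} be estimators of the conditional margins (measurable functions of the sample and of (y,x)) satisfying conditions (H1), (H2) and (H3). Let Ĝ_{n,j}(u) = n^{−1} Σ_{i=1}^n 1{F̂_{n,j}(Y_{ij}|X_i) ≤ u} and let Ĝ^{(or)}_{n,j}(u) = n^{−1} Σ_{i=1}^n 1{F_j(Y_{ij}|X_i) ≤ u}. Then for each j ∈ {1,2} and each γ ∈ (0,1/2), sup_{u ∈ [γ,1−γ]} | Ĝ_{n,j}(u) − Ĝ^{(or)}_{n,j}(u) | = o_P(n^{−1/4}) as n → ∞. -/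

import Mathlib

open MeasureTheory ProbabilityTheory Filter Set Topology

noncomputable section

/-- Generalized inverse `F⁻(u) = inf { y : F y ≥ u }`. -/
def genInv (F : ℝ → ℝ) (u : ℝ) : ℝ := sInf {y : ℝ | u ≤ F y}

/-- The Hölder regularity class `C_{k+δ,M}(S)`: `k` times differentiable, all
derivatives up to order `k` (including the function) bounded by `M`, and the
order-`k` derivative `δ`-Hölder with constant `M`. -/
def HClass {E : Type*} [NormedAddCommGroup E] [NormedSpace ℝ E]
    (k : ℕ) (δ M : ℝ) (S : Set E) (f : E → ℝ) : Prop :=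
  ContDiffOn ℝ k f S ∧
  (∀ l : ℕ, l ≤ k → ∀ z ∈ S, ‖iteratedFDerivWithin ℝ l f S z‖ ≤ M) ∧
  ∀ z ∈ S, ∀ z' ∈ S,
    ‖iteratedFDerivWithin ℝ k f S z - iteratedFDerivWithin ℝ k f S z'‖ ≤ M * ‖z - z'‖ ^ δ

/-- Basic kernel requirements of (G3): bounded, nonnegative, symmetric,
supported in `(-1,1)`, integrating to one. -/
def KernelBase (K : ℝ → ℝ) : Prop :=
  (∃ C, ∀ u, K u ≤ C) ∧ (∀ u, 0 ≤ K u) ∧ (∀ u, K (-u) = K u) ∧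
  (∀ u, u ∉ Set.Ioo (-1 : ℝ) 1 → K u = 0) ∧ (∫ u, K u) = 1

/-- (G3) requirements on the kernel `L`. -/
def KernelCondL (L : ℝ → ℝ) : Prop :=
  KernelBase L ∧ ContDiff ℝ 1 L ∧ (∃ C, ∀ u, |deriv L u| ≤ C) ∧
  BoundedVariationOn (deriv L) Set.univ

/-- (G3) requirements on the kernel `K`. -/
def KernelCondK (K : ℝ → ℝ) : Prop :=
  KernelBase K ∧ ContDiff ℝ 2 K ∧ (∃ C, ∀ u, |deriv (deriv K) u| ≤ C) ∧
  BoundedVariationOn (deriv (deriv K)) Set.univ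

/-- `φ_h(y, Y) = ∫_{-∞}^y h⁻¹ L((t-Y)/h) dt`. -/
def phiSm (L : ℝ → ℝ) (h y Y : ℝ) : ℝ := ∫ t in Set.Iic y, h⁻¹ * L ((t - Y) / h)

/-- `w_k(u) = u^k K(u)`. -/
def wk (K : ℝ → ℝ) (k : ℕ) (u : ℝ) : ℝ := u ^ k * K u

/-- `p̂_{n,k}(x)`. -/
def phat {Ω : Type*} (K : ℝ → ℝ) (h1 : ℕ → ℝ) (X : ℕ → Ω → ℝ)
    (n k : ℕ) (x : ℝ) (ω : Ω) : ℝ :=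
  (n : ℝ)⁻¹ * ∑ i ∈ Finset.range n, (h1 n)⁻¹ * wk K k ((x - X i ω) / h1 n)

/-- `Q̂_{n,k}(y,x)`. -/
def Qhat {Ω : Type*} (K L : ℝ → ℝ) (h1 h2 : ℕ → ℝ) (X Y : ℕ → Ω → ℝ)
    (n k : ℕ) (y x : ℝ) (ω : Ω) : ℝ :=
  (n : ℝ)⁻¹ * ∑ i ∈ Finset.range n,
    phiSm L (h2 n) y (Y i ω) * ((h1 n)⁻¹ * wk K k ((x - X i ω) / h1 n))

/-- The smoothed local linear estimator `F̂_n(y|x)` in closed form. -/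
def Fhat {Ω : Type*} (K L : ℝ → ℝ) (h1 h2 : ℕ → ℝ) (X Y : ℕ → Ω → ℝ)
    (n : ℕ) (y x : ℝ) (ω : Ω) : ℝ :=
  (Qhat K L h1 h2 X Y n 0 y x ω * phat K h1 X n 2 x ω
      - Qhat K L h1 h2 X Y n 1 y x ω * phat K h1 X n 1 x ω) /
    (phat K h1 X n 0 x ω * phat K h1 X n 2 x ω - (phat K h1 X n 1 x ω) ^ 2)

/-- Bandwidth conditions (G4'). -/
structure BandG4' (h1 h2 : ℕ → ℝ) : Prop where
  pos1 : ∀ n, 0 < h1 n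
  pos2 : ∀ n, 0 < h2 n
  to0₁ : Tendsto h1 atTop (𝓝 0)
  to0₂ : Tendsto h2 atTop (𝓝 0)
  r1 : Tendsto (fun n : ℕ => (n : ℝ) * h1 n ^ 3 / |Real.log (h1 n)|) atTop atTop
  r2 : Tendsto (fun n : ℕ => (n : ℝ) * (h1 n * h2 n) / |Real.log (h1 n * h2 n)|) atTop atTop

/-- Bandwidth conditions (G4), for a given `α > 0`. -/
structure BandG4 (h1 h2 : ℕ → ℝ) (α : ℝ) : Prop where
  αpos : 0 < α
  pos1 : ∀ n, 0 < h1 n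
  pos2 : ∀ n, 0 < h2 n
  b1 : Tendsto (fun n : ℕ => (n : ℝ) * h1 n ^ 8) atTop (𝓝 0)
  b2 : Tendsto (fun n : ℕ => (n : ℝ) * h2 n ^ 8) atTop (𝓝 0)
  b3 : Tendsto (fun n => h1 n ^ ((-1 : ℝ) - α / 2) * h2 n ^ 2) atTop (𝓝 0)
  b4 : Tendsto (fun n : ℕ => (n : ℝ) * h1 n ^ ((3 : ℝ) + α) / |Real.log (h1 n)|) atTop atTop
  b5 : Tendsto (fun n : ℕ => (n : ℝ) * h1 n ^ ((1 : ℝ) + α) * h2 n / |Real.log (h1 n * h2 n)|)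
        atTop atTop

/-- Bandwidth conditions (G4''), for a given `α > 0`. -/
structure BandG4'' (h1 h2 : ℕ → ℝ) (α : ℝ) : Prop where
  αpos : 0 < α
  pos1 : ∀ n, 0 < h1 n
  pos2 : ∀ n, 0 < h2 n
  to0₁ : Tendsto h1 atTop (𝓝 0)
  to0₂ : Tendsto h2 atTop (𝓝 0)
  b3 : Tendsto (fun n => h1 n ^ ((-1 : ℝ) - α / 2) * h2 n ^ 2) atTop (𝓝 0)
  b4 : Tendsto (fun n : ℕ => (n : ℝ) * h1 n ^ ((3 : ℝ) + α) / |Real.log (h1 n)|) atTop atTop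
  b5 : Tendsto (fun n : ℕ => (n : ℝ) * h1 n ^ ((1 : ℝ) + α) * h2 n / |Real.log (h1 n * h2 n)|)
        atTop atTop

/-- Marginal density of `X` from a joint density of `(X, Y₁, Y₂)`. -/
def fX3 (fXY : ℝ → ℝ → ℝ → ℝ) (x : ℝ) : ℝ := ∫ p : ℝ × ℝ, fXY x p.1 p.2

/-- Conditional margin `F₁(y|x)` from a joint density of `(X, Y₁, Y₂)`. -/
def F1c (fXY : ℝ → ℝ → ℝ → ℝ) (y x : ℝ) : ℝ :=
  (∫ z in Set.Iic y, ∫ t, fXY x z t) / fX3 fXY x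

/-- Conditional margin `F₂(y|x)` from a joint density of `(X, Y₁, Y₂)`. -/
def F2c (fXY : ℝ → ℝ → ℝ → ℝ) (y x : ℝ) : ℝ :=
  (∫ z in Set.Iic y, ∫ t, fXY x t z) / fX3 fXY x

/-- Conditional marginal density `f₁(y|x)`. -/
def f1c (fXY : ℝ → ℝ → ℝ → ℝ) (y x : ℝ) : ℝ := (∫ t, fXY x y t) / fX3 fXY x

/-- Conditional marginal density `f₂(y|x)`. -/
def f2c (fXY : ℝ → ℝ → ℝ → ℝ) (y x : ℝ) : ℝ := (∫ t, fXY x t y) / fX3 fXY x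

/-- Condition (G1) on the law of the triple `(X, Y₁, Y₂)`, described through
its joint density `fXY` on `S_X × ℝ²`, `S_X = (s0, s1)`. -/
structure CondG1T (fXY : ℝ → ℝ → ℝ → ℝ) (s0 s1 b M δ : ℝ) : Prop where
  hs : s0 < s1
  hb : 0 < b
  hM : 0 < M
  hδ0 : 0 < δ
  hδ1 : δ ≤ 1
  nonneg : ∀ x y1 y2, 0 ≤ fXY x y1 y2
  supp : ∀ x y1 y2, x ∉ Set.Ioo s0 s1 → fXY x y1 y2 = 0
  F1reg : HClass 3 δ M (Set.univ ×ˢ Set.Ioo s0 s1) (fun p : ℝ × ℝ => F1c fXY p.1 p.2)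
  F2reg : HClass 3 δ M (Set.univ ×ˢ Set.Ioo s0 s1) (fun p : ℝ × ℝ => F2c fXY p.1 p.2)
  fXreg : HClass 1 1 M (Set.Ioo s0 s1) (fX3 fXY)
  fXlb : ∀ x ∈ Set.Ioo s0 s1, b ≤ fX3 fXY x
  f1lb : ∀ γ ∈ Set.Ioo (0 : ℝ) (1 / 2), ∃ bγ > (0 : ℝ), ∀ x ∈ Set.Ioo s0 s1,
    ∀ y ∈ Set.Icc (genInv (fun z => F1c fXY z x) γ) (genInv (fun z => F1c fXY z x) (1 - γ)),
      bγ ≤ f1c fXY y x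
  f2lb : ∀ γ ∈ Set.Ioo (0 : ℝ) (1 / 2), ∃ bγ > (0 : ℝ), ∀ x ∈ Set.Ioo s0 s1,
    ∀ y ∈ Set.Icc (genInv (fun z => F2c fXY z x) γ) (genInv (fun z => F2c fXY z x) (1 - γ)),
      bγ ≤ f2c fXY y x

/-- The data `(X_i, Y_{i1}, Y_{i2})` are i.i.d. with common law of density `fXY`. -/
structure IIDLaw3 {Ω : Type*} [MeasurableSpace Ω] (P : Measure Ω)
    (X Y1 Y2 : ℕ → Ω → ℝ) (fXY : ℝ → ℝ → ℝ → ℝ) : Prop where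
  measX : ∀ i, Measurable (X i)
  measY1 : ∀ i, Measurable (Y1 i)
  measY2 : ∀ i, Measurable (Y2 i)
  indep : iIndepFun (fun i ω => (X i ω, Y1 i ω, Y2 i ω)) P
  ident : ∀ i, IdentDistrib (fun ω => (X i ω, Y1 i ω, Y2 i ω))
    (fun ω => (X 0 ω, Y1 0 ω, Y2 0 ω)) P P
  law : Measure.map (fun ω => (X 0 ω, Y1 0 ω, Y2 0 ω)) P
    = (volume : Measure (ℝ × ℝ × ℝ)).withDensity
        (fun p => ENNReal.ofReal (fXY p.1 p.2.1 p.2.2))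

/-- The (common) conditional copula,
`C(u₁,u₂) = P(F₁(Y₁|X) ≤ u₁, F₂(Y₂|X) ≤ u₂)`. -/
def copC {Ω : Type*} [MeasurableSpace Ω] (P : Measure Ω)
    (X Y1 Y2 : ℕ → Ω → ℝ) (fXY : ℝ → ℝ → ℝ → ℝ) (u : ℝ × ℝ) : ℝ :=
  (P {ω | F1c fXY (Y1 0 ω) (X 0 ω) ≤ u.1 ∧ F2c fXY (Y2 0 ω) (X 0 ω) ≤ u.2}).toReal

/-- Standard basis of `ℝ²`, used to express partial derivatives. -/
def bas2 : Fin 2 → ℝ × ℝ := ![((1 : ℝ), (0 : ℝ)), ((0 : ℝ), (1 : ℝ))]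

/-- Coordinates of a point of `ℝ²`. -/
def coord2 (p : ℝ × ℝ) : Fin 2 → ℝ := ![p.1, p.2]

/-- Condition (G2) on a copula `C` : twice continuously differentiable on the
open unit square with the weighted bound on its second-order partial
derivatives. -/
def CopulaG2 (C : ℝ × ℝ → ℝ) : Prop :=
  ContDiffOn ℝ 2 C (Set.Ioo 0 1 ×ˢ Set.Ioo 0 1) ∧
  ∃ κ > (0 : ℝ), ∀ p ∈ Set.Ioo (0 : ℝ) 1 ×ˢ Set.Ioo (0 : ℝ) 1, ∀ j k : Fin 2,
    |fderiv ℝ (fun q => fderiv ℝ C q (bas2 j)) p (bas2 k)| ≤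
      κ / Real.sqrt (coord2 p j * (1 - coord2 p j) * (coord2 p k * (1 - coord2 p k)))

/-- Empirical (marginal) distribution function `Ĝ_{n}` of the pseudo
observations built from a (possibly estimated) conditional margin `Fh`. -/
def Ghat {Ω : Type*} (Fh : ℕ → ℝ → ℝ → Ω → ℝ) (X Yj : ℕ → Ω → ℝ)
    (n : ℕ) (u : ℝ) (ω : Ω) : ℝ :=
  (n : ℝ)⁻¹ * ∑ i ∈ Finset.range n, if Fh n (Yj i ω) (X i ω) ω ≤ u then (1 : ℝ) else 0

/-- The empirical conditional copula `Ĉ_n` built from (possibly estimated)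
conditional margins `Fh1`, `Fh2`. -/
def Chat {Ω : Type*} (Fh1 Fh2 : ℕ → ℝ → ℝ → Ω → ℝ) (X Y1 Y2 : ℕ → Ω → ℝ)
    (n : ℕ) (u1 u2 : ℝ) (ω : Ω) : ℝ :=
  (n : ℝ)⁻¹ * ∑ i ∈ Finset.range n,
    (if Fh1 n (Y1 i ω) (X i ω) ω ≤ genInv (fun v => Ghat Fh1 X Y1 n v ω) u1
      then (1 : ℝ) else 0) *
    (if Fh2 n (Y2 i ω) (X i ω) ω ≤ genInv (fun v => Ghat Fh2 X Y2 n v ω) u2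
      then (1 : ℝ) else 0)

/-- Condition (H1) for an estimator `Fh` of the conditional margin `F`. -/
def CondH1 {Ω : Type*} [MeasurableSpace Ω] (P : Measure Ω) (s0 s1 : ℝ)
    (F : ℝ → ℝ → ℝ) (Fh : ℕ → ℝ → ℝ → Ω → ℝ) : Prop :=
  ∀ γ ∈ Set.Ioo (0 : ℝ) (1 / 2),
    Tendsto (fun n => P {ω | ∀ x ∈ Set.Ioo s0 s1,
        Continuous (fun y => Fh n y x ω) ∧
        StrictMonoOn (fun y => Fh n y x ω)
          (Set.Icc (genInv (fun z => F z x) γ) (genInv (fun z => F z x) (1 - γ)))})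
      atTop (𝓝 1)

/-- Condition (H2) for an estimator `Fh` of the conditional margin `F`:
`sup_{x ∈ S_X, y ∈ ℝ} |F̂_{n}(y|x) - F(y|x)| = o_P(n^{-1/4})`. -/
def CondH2 {Ω : Type*} [MeasurableSpace Ω] (P : Measure Ω) (s0 s1 : ℝ)
    (F : ℝ → ℝ → ℝ) (Fh : ℕ → ℝ → ℝ → Ω → ℝ) : Prop :=
  ∀ ε > (0 : ℝ),
    Tendsto (fun n : ℕ => P {ω | ∃ x ∈ Set.Ioo s0 s1, ∃ y : ℝ,
        ε * (n : ℝ) ^ (-(1 / 4) : ℝ) < |Fh n y x ω - F y x|})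
      atTop (𝓝 0)

/-- Condition (H3) for an estimator `Fh` of a conditional margin. -/
def CondH3 {Ω : Type*} [MeasurableSpace Ω] (P : Measure Ω) (s0 s1 : ℝ)
    (Fh : ℕ → ℝ → ℝ → Ω → ℝ) : Prop :=
  ∀ γ ∈ Set.Ioo (0 : ℝ) (1 / 2), ∃ δ₁ > (0 : ℝ), ∃ M₁ > (0 : ℝ),
    Tendsto (fun n => P {ω | ∀ u ∈ Set.Icc γ (1 - γ),
        HClass 1 δ₁ M₁ (Set.Ioo s0 s1) (fun x => genInv (fun y => Fh n y x ω) u)})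
      atTop (𝓝 1)


open scoped ENNReal
open Metric

/-! On the event `sup |F̂ - F| ≤ η` the indicators `1{F̂(Yᵢ|Xᵢ) ≤ u}` and `1{F(Yᵢ|Xᵢ) ≤ u}` can
only differ when `Zᵢ = F(Yᵢ|Xᵢ)` is `η`-close to `u`. The `Zᵢ` are i.i.d. with a density bounded
by `M |S_X|` (where `f_X ≤ M`), so for `η = ε' n^{-1/4}` and a grid of mesh `η` in `[0, 1]`,
Chebyshev shows that a window of width `4η` around a grid point holds more than `ε n^{3/4}` of the
`Zᵢ` with probability `O(n^{-3/4})`. Summing over the `O(n^{1/4})` grid points leaves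
`O(n^{-1/2})`, and (H2) controls the event `sup |F̂ - F| > η`. The second margin is the first one
for the triple `(X, Y₂, Y₁)`. -/

def empCDF (z : ℕ → ℝ) (n : ℕ) (u : ℝ) : ℝ :=
  (n : ℝ)⁻¹ * ∑ i ∈ Finset.range n, if z i ≤ u then 1 else 0

lemma Ghat_eq_empCDF {Ω : Type*} (Fh : ℕ → ℝ → ℝ → Ω → ℝ) (X Yj : ℕ → Ω → ℝ) (n : ℕ) (u : ℝ)
    (ω : Ω) : Ghat Fh X Yj n u ω = empCDF (fun i => Fh n (Yj i ω) (X i ω) ω) n u := rfl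

lemma abs_ite_sub_ite_le_indicator_closedBall {a b u η : ℝ} (h : |a - b| ≤ η) :
    |(if a ≤ u then (1 : ℝ) else 0) - if b ≤ u then 1 else 0|
      ≤ (closedBall u η).indicator 1 b := by
  obtain ⟨h₁, h₂⟩ := abs_le.mp h
  by_cases hb : b ∈ closedBall u η
  · rw [indicator_of_mem hb]
    split_ifs <;> norm_num
  · rw [indicator_of_notMem hb]
    rw [mem_closedBall, Real.dist_eq, abs_le, not_and_or, not_le, not_le] at hb
    rcases hb with hb | hb <;> split_ifs <;> norm_num <;> linarith

lemma abs_empCDF_sub_le {zhat z : ℕ → ℝ} {n : ℕ} {η : ℝ} (h : ∀ i < n, |zhat i - z i| ≤ η)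
    (u : ℝ) :
    |empCDF zhat n u - empCDF z n u|
      ≤ (n : ℝ)⁻¹ * ∑ i ∈ Finset.range n, (closedBall u η).indicator 1 (z i) := by
  rw [empCDF, empCDF, ← mul_sub, ← Finset.sum_sub_distrib, abs_mul, abs_inv, Nat.abs_cast]
  gcongr
  refine (Finset.abs_sum_le_sum_abs _ _).trans (Finset.sum_le_sum fun i hi => ?_)
  exact abs_ite_sub_ite_le_indicator_closedBall (h i (Finset.mem_range.mp hi))

lemma exists_le_floor_closedBall_subset {u η : ℝ} (hu : u ∈ Icc (0 : ℝ) 1) (hη : 0 < η) :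
    ∃ k ≤ ⌊η⁻¹⌋₊, closedBall u η ⊆ closedBall (k * η) (2 * η) := by
  refine ⟨⌊u / η⌋₊, Nat.floor_mono ?_, ?_⟩
  · rw [div_eq_mul_inv]
    exact mul_le_of_le_one_left (inv_nonneg.mpr hη.le) hu.2
  · have h1 : (⌊u / η⌋₊ : ℝ) * η ≤ u := by
      rw [← le_div_iff₀ hη]; exact Nat.floor_le (div_nonneg hu.1 hη.le)
    have h2 : u < (⌊u / η⌋₊ + 1 : ℝ) * η := by
      rw [← div_lt_iff₀ hη]; exact Nat.lt_floor_add_one _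
    refine closedBall_subset_closedBall' ?_
    have : |u - ⌊u / η⌋₊ * η| ≤ η := abs_le.mpr ⟨by linarith, by linarith⟩
    rw [Real.dist_eq]
    linarith

lemma abs_empCDF_sub_le_of_grid {zhat z : ℕ → ℝ} {n : ℕ} {η τ : ℝ} (hη : 0 < η)
    (hclose : ∀ i < n, |zhat i - z i| ≤ η)
    (hgrid : ∀ k ≤ ⌊η⁻¹⌋₊,
      ∑ i ∈ Finset.range n, (closedBall (k * η) (2 * η)).indicator 1 (z i) ≤ τ)
    {u : ℝ} (hu : u ∈ Icc (0 : ℝ) 1) :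
    |empCDF zhat n u - empCDF z n u| ≤ (n : ℝ)⁻¹ * τ := by
  obtain ⟨k, hk, hball⟩ := exists_le_floor_closedBall_subset hu hη
  refine (abs_empCDF_sub_le hclose u).trans (mul_le_mul_of_nonneg_left ?_ (by positivity))
  refine le_trans (Finset.sum_le_sum fun i _ => ?_) (hgrid k hk)
  exact indicator_le_indicator_of_subset hball (fun _ => zero_le_one) _

lemma measure_lt_sum_indicator_le {α Ω : Type*} [MeasurableSpace α] [MeasurableSpace Ω]
    {P : Measure Ω} [IsProbabilityMeasure P] {V : ℕ → Ω → α} (hV : ∀ i, Measurable (V i))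
    (hindep : iIndepFun V P) (hident : ∀ i, IdentDistrib (V i) (V 0) P P)
    {A : Set α} (hA : MeasurableSet A) (n : ℕ) {p τ : ℝ} (hp : P.real (V 0 ⁻¹' A) ≤ p)
    (hτ : 0 < τ) (hnp : 2 * n * p ≤ τ) :
    P {ω | τ < ∑ i ∈ Finset.range n, A.indicator 1 (V i ω)}
      ≤ ENNReal.ofReal (4 * n * p / τ ^ 2) := by
  set ξ : ℕ → Ω → ℝ := fun i ω => A.indicator 1 (V i ω) with hξ
  have hξ_eq : ∀ i, ξ i = (V i ⁻¹' A).indicator 1 := fun i => funext fun ω =>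
    (indicator_comp_right (g := (1 : α → ℝ)) (V i)).symm
  have hL2 : ∀ i, MemLp (ξ i) 2 P := fun i => by
    rw [hξ_eq]; exact memLp_indicator_const 2 (hV i hA) 1 (Or.inr (measure_ne_top _ _))
  have hmean : ∀ i, P[ξ i] = P.real (V 0 ⁻¹' A) := fun i =>
    calc P[ξ i] = P[ξ 0] := ((hident i).comp (measurable_one.indicator hA)).integral_eq
      _ = P.real (V 0 ⁻¹' A) := by rw [hξ_eq]; exact integral_indicator_one (hV 0 hA)
  have hvar : ∀ i, variance (ξ i) P ≤ P.real (V 0 ⁻¹' A) := fun i => by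
    have hsq : ξ i ^ 2 = ξ i := funext fun ω => by
      simp only [Pi.pow_apply, hξ]; by_cases h : V i ω ∈ A <;> simp [h]
    calc variance (ξ i) P ≤ P[ξ i ^ 2] := variance_le_expectation_sq (hL2 i).aestronglyMeasurable
      _ = P.real (V 0 ⁻¹' A) := by rw [hsq, hmean]
  set S : Ω → ℝ := ∑ i ∈ Finset.range n, ξ i with hS
  have hS_mean : P[S] = n * P.real (V 0 ⁻¹' A) := by
    simp only [hS, Finset.sum_apply]
    rw [integral_finsetSum _ fun i _ => (hL2 i).integrable one_le_two]
    simp [hmean]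
  have hξ_indep : iIndepFun ξ P := hindep.comp _ fun _ => measurable_one.indicator hA
  have hS_var : variance S P ≤ n * p := by
    rw [hS, IndepFun.variance_sum (fun i _ => hL2 i) fun i _ j _ hij => hξ_indep.indepFun hij]
    calc ∑ i ∈ Finset.range n, variance (ξ i) P ≤ ∑ _i ∈ Finset.range n, p :=
          Finset.sum_le_sum fun i _ => (hvar i).trans hp
      _ = n * p := by simp
  have hsub : {ω | τ < ∑ i ∈ Finset.range n, A.indicator 1 (V i ω)}
      ⊆ {ω | τ / 2 ≤ |S ω - P[S]|} := fun ω hω => by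
    have hSω : S ω = ∑ i ∈ Finset.range n, A.indicator 1 (V i ω) := by simp [hS, hξ]
    have : n * P.real (V 0 ⁻¹' A) ≤ n * p := by gcongr
    simp only [mem_ofPred_eq] at hω ⊢
    rw [hS_mean, hSω]
    exact le_trans (by linarith) (le_abs_self _)
  refine (measure_mono hsub).trans ((meas_ge_le_variance_div_sq (memLp_finsetSum' _
    fun i _ => hL2 i) (half_pos hτ)).trans (ENNReal.ofReal_le_ofReal ?_))
  rw [div_pow, div_div_eq_mul_div, mul_comm, mul_assoc]
  gcongr
  norm_num
  linarith

lemma tendsto_inv_add_one_div_mul_rpow {c : ℝ} :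
    Tendsto (fun n : ℕ => ((c * (n : ℝ) ^ (-(1 / 4) : ℝ))⁻¹ + 1) / (n * (n : ℝ) ^ (-(1 / 4) : ℝ)))
      atTop (𝓝 0) := by
  set ρ : ℕ → ℝ := fun n => (n : ℝ) ^ (-(1 / 4) : ℝ)
  have hρ : Tendsto ρ atTop (𝓝 0) :=
    (tendsto_rpow_neg_atTop (by norm_num : (0 : ℝ) < 1 / 4)).comp tendsto_natCast_atTop_atTop
  have heq : ∀ᶠ n : ℕ in atTop, c⁻¹ * ρ n ^ 2 + ρ n ^ 3 = ((c * ρ n)⁻¹ + 1) / (n * ρ n) := by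
    filter_upwards [eventually_ge_atTop 1] with n hn
    have hn0 : (0 : ℝ) < n := by exact_mod_cast hn
    have hρ0 : ρ n ≠ 0 := (Real.rpow_pos_of_pos hn0 _).ne'
    have hn : (n : ℝ) = (ρ n ^ 4)⁻¹ := by
      rw [← Real.rpow_natCast, ← Real.rpow_mul hn0.le]
      norm_num [Real.rpow_neg_one]
    rw [hn, mul_inv]
    field_simp
  have := ((hρ.pow 2).const_mul c⁻¹ |>.add (hρ.pow 3)).congr' heq
  rwa [zero_pow two_ne_zero, zero_pow three_ne_zero, mul_zero, add_zero] at this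

section EmpiricalProcess

variable {Ω : Type*} [MeasurableSpace Ω] {P : Measure Ω} [IsProbabilityMeasure P]
  {Z : ℕ → Ω → ℝ} {L : ℝ}

lemma measure_exists_lt_abs_empCDF_sub_le (hZ : ∀ i, Measurable (Z i)) (hindep : iIndepFun Z P)
    (hident : ∀ i, IdentDistrib (Z i) (Z 0) P P)
    (hdens : ∀ w r, 0 ≤ r → P.real (Z 0 ⁻¹' closedBall w r) ≤ L * (2 * r))
    (Zhat : ℕ → Ω → ℝ) (n : ℕ) {η τ : ℝ} (hη : 0 < η) (hτ : 0 < τ) (hητ : 8 * n * L * η ≤ τ) :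
    P {ω | ∃ u ∈ Icc (0 : ℝ) 1, (n : ℝ)⁻¹ * τ < |empCDF (Zhat · ω) n u - empCDF (Z · ω) n u|}
      ≤ P {ω | ∃ i < n, η < |Zhat i ω - Z i ω|}
        + ENNReal.ofReal ((η⁻¹ + 1) * (16 * n * L * η / τ ^ 2)) := by
  set dev : ℕ → Set Ω := fun k => {ω | τ < ∑ i ∈ Finset.range n,
    (closedBall (k * η) (2 * η)).indicator 1 (Z i ω)}
  have hsub : {ω | ∃ u ∈ Icc (0 : ℝ) 1,
      (n : ℝ)⁻¹ * τ < |empCDF (Zhat · ω) n u - empCDF (Z · ω) n u|}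
      ⊆ {ω | ∃ i < n, η < |Zhat i ω - Z i ω|} ∪ ⋃ k ∈ Finset.range (⌊η⁻¹⌋₊ + 1), dev k := by
    rintro ω ⟨u, hu, hlt⟩
    by_contra hgood
    simp only [mem_union, mem_iUnion, Finset.mem_range, Nat.lt_succ_iff, not_or, not_exists,
      mem_ofPred_eq, not_and, not_lt, dev] at hgood
    exact hlt.not_ge (abs_empCDF_sub_le_of_grid hη hgood.1 hgood.2 hu)
  have hdev : ∀ k, P (dev k) ≤ ENNReal.ofReal (16 * n * L * η / τ ^ 2) := fun k =>
    (measure_lt_sum_indicator_le hZ hindep hident measurableSet_closedBall n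
      (hdens _ _ (by positivity)) hτ (by linarith)).trans_eq (by ring_nf)
  have hcard : ((⌊η⁻¹⌋₊ + 1 : ℕ) : ℝ≥0∞) ≤ ENNReal.ofReal (η⁻¹ + 1) := by
    rw [← ENNReal.ofReal_natCast]
    exact ENNReal.ofReal_le_ofReal (by push_cast; linarith [Nat.floor_le (inv_nonneg.mpr hη.le)])
  calc _ ≤ _ := measure_mono hsub
    _ ≤ _ + ∑ k ∈ Finset.range (⌊η⁻¹⌋₊ + 1), P (dev k) :=
        (measure_union_le _ _).trans (add_le_add le_rfl (measure_biUnion_finset_le _ _))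
    _ ≤ _ + ENNReal.ofReal (η⁻¹ + 1) * ENNReal.ofReal (16 * n * L * η / τ ^ 2) := by
        gcongr
        refine (Finset.sum_le_card_nsmul _ _ _ fun k _ => hdev k).trans ?_
        rw [Finset.card_range, nsmul_eq_mul]
        gcongr
    _ = _ := by rw [← ENNReal.ofReal_mul (by positivity)]

theorem tendsto_measure_exists_lt_abs_empCDF_sub (hZ : ∀ i, Measurable (Z i))
    (hindep : iIndepFun Z P) (hident : ∀ i, IdentDistrib (Z i) (Z 0) P P) (hL : 0 < L)
    (hdens : ∀ w r, 0 ≤ r → P.real (Z 0 ⁻¹' closedBall w r) ≤ L * (2 * r))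
    {Zhat : ℕ → ℕ → Ω → ℝ}
    (hclose : ∀ ε > 0, Tendsto (fun n : ℕ => P {ω | ∃ i < n,
      ε * (n : ℝ) ^ (-(1 / 4) : ℝ) < |Zhat n i ω - Z i ω|}) atTop (𝓝 0))
    {ε : ℝ} (hε : 0 < ε) :
    Tendsto (fun n : ℕ => P {ω | ∃ u ∈ Icc (0 : ℝ) 1,
      ε * (n : ℝ) ^ (-(1 / 4) : ℝ) < |empCDF (Zhat n · ω) n u - empCDF (Z · ω) n u|})
      atTop (𝓝 0) := by
  set ρ : ℕ → ℝ := fun n => (n : ℝ) ^ (-(1 / 4) : ℝ)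
  -- mesh `η = ε' ρ n` and threshold `τ = ε n ρ n` satisfy `8 n L η = τ`
  set ε' := ε / (8 * L)
  have hbound : ∀ n ≥ 1, P {ω | ∃ u ∈ Icc (0 : ℝ) 1,
      ε * ρ n < |empCDF (Zhat n · ω) n u - empCDF (Z · ω) n u|}
      ≤ P {ω | ∃ i < n, ε' * ρ n < |Zhat n i ω - Z i ω|}
        + ENNReal.ofReal (2 / ε * (((ε' * ρ n)⁻¹ + 1) / (n * ρ n))) := by
    intro n hn
    have hn0 : (0 : ℝ) < n := by exact_mod_cast hn
    have hρ0 : 0 < ρ n := Real.rpow_pos_of_pos hn0 _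
    have h := measure_exists_lt_abs_empCDF_sub_le hZ hindep hident hdens (Zhat n) n
      (η := ε' * ρ n) (τ := ε * (n * ρ n)) (by positivity) (by positivity)
      (le_of_eq (by simp only [ε']; field_simp))
    rw [show (n : ℝ)⁻¹ * (ε * (n * ρ n)) = ε * ρ n by field_simp] at h
    refine h.trans_eq (congrArg _ (congrArg _ ?_))
    simp only [ε']
    field_simp
    ring
  have hrate : Tendsto (fun n : ℕ => P {ω | ∃ i < n, ε' * ρ n < |Zhat n i ω - Z i ω|}
      + ENNReal.ofReal (2 / ε * (((ε' * ρ n)⁻¹ + 1) / (n * ρ n)))) atTop (𝓝 0) := by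
    have := (hclose ε' (by positivity)).add (ENNReal.tendsto_ofReal
      ((tendsto_inv_add_one_div_mul_rpow (c := ε')).const_mul (2 / ε)))
    rwa [mul_zero, ENNReal.ofReal_zero, add_zero] at this
  exact tendsto_of_tendsto_of_tendsto_of_le_of_le' tendsto_const_nhds hrate
    (Eventually.of_forall fun _ => zero_le) (eventually_ge_atTop 1 |>.mono hbound)

end EmpiricalProcess

lemma measure_le_ofReal_sub_of_cdf {μ : Measure ℝ} [NullSingletonClass μ] {F : ℝ → ℝ}
    (hF : Continuous F) (hμ : ∀ y, μ (Iic y) = ENNReal.ofReal (F y)) {s : Set ℝ} {a b : ℝ}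
    (hs : s ⊆ F ⁻¹' Icc a b) : μ s ≤ ENNReal.ofReal (b - a) := by
  have hIoc : ∀ {p q}, p ≤ q → F p ∈ Icc a b → F q ∈ Icc a b →
      μ (Ioc p q) ≤ ENNReal.ofReal (b - a) := fun {p q} hpq hp hq => by
    have hsplit : μ (Iic p) + μ (Ioc p q) = μ (Iic q) := by
      rw [← measure_union (Iic_disjoint_Ioc le_rfl) measurableSet_Ioc, Iic_union_Ioc_eq_Iic hpq]
    refine (ENNReal.add_le_add_iff_left (hμ p ▸ ENNReal.ofReal_ne_top)).mp ?_
    rw [hsplit, hμ p]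
    calc μ (Iic q) = ENNReal.ofReal (F p + (F q - F p)) := by rw [hμ]; ring_nf
      _ ≤ ENNReal.ofReal (F p) + ENNReal.ofReal (b - a) :=
          ENNReal.ofReal_add_le.trans (add_le_add le_rfl
            (ENNReal.ofReal_le_ofReal (by linarith [hp.1, hq.2])))
  have hbdd : ∀ t ⊆ s, t.Nonempty → BddBelow t → BddAbove t →
      μ t ≤ ENNReal.ofReal (b - a) := fun t hts hne hbl hba => by
    have hcl : closure t ⊆ F ⁻¹' Icc a b :=
      (isClosed_Icc.preimage hF).closure_subset_iff.mpr (hts.trans hs)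
    calc μ t ≤ μ (Icc (sInf t) (sSup t)) :=
          measure_mono fun y hy => ⟨csInf_le hbl hy, le_csSup hba hy⟩
      _ = μ (Ioc (sInf t) (sSup t)) := (measure_congr Ioc_ae_eq_Icc).symm
      _ ≤ _ := hIoc (csInf_le_csSup hne hbl hba) (hcl (csInf_mem_closure hne hbl))
          (hcl (csSup_mem_closure hne hba))
  have hmono : Monotone fun n : ℕ => s ∩ Icc (-n : ℝ) n := fun m n hmn =>
    inter_subset_inter_right _ (Icc_subset_Icc (by simpa using hmn) (by simpa using hmn))
  have hunion : ⋃ n : ℕ, s ∩ Icc (-n : ℝ) n = s := by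
    refine (iUnion_subset fun _ => inter_subset_left).antisymm fun y hy => ?_
    obtain ⟨n, hn⟩ := exists_nat_ge |y|
    exact mem_iUnion.mpr ⟨n, hy, abs_le.mp hn⟩
  rw [← hunion, hmono.measure_iUnion]
  refine iSup_le fun n => ?_
  rcases (s ∩ Icc (-n : ℝ) n).eq_empty_or_nonempty with h | h
  · simp [h]
  · exact hbdd _ inter_subset_left h (bddBelow_Icc.mono inter_subset_right)
      (bddAbove_Icc.mono inter_subset_right)

lemma setLIntegral_lintegral_le_of_F1c (f : ℝ → ℝ → ℝ → ℝ) {x : ℝ}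
    (hf0 : ∀ y t, 0 ≤ f x y t) (hx : 0 < fX3 f x) (hcont : Continuous fun y => F1c f y x)
    {s : Set ℝ} {a b : ℝ} (hs : s ⊆ (fun y => F1c f y x) ⁻¹' Icc a b) :
    ∫⁻ y in s, ∫⁻ t, ENNReal.ofReal (f x y t) ≤ ENNReal.ofReal ((b - a) * fX3 f x) := by
  -- if the slice were not integrable, `fX3 f x` would be the junk value `0`
  have hint : Integrable (fun q : ℝ × ℝ => f x q.1 q.2) (volume.prod volume) := by
    rw [← Measure.volume_eq_prod]
    by_contra h
    exact hx.ne' (integral_undef h)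
  set h : ℝ → ℝ := fun y => ∫ t, f x y t
  have hh_int : Integrable h := hint.integral_prod_left
  have hinner : ∀ᵐ y, ∫⁻ t, ENNReal.ofReal (f x y t) = ENNReal.ofReal (h y) := by
    filter_upwards [hint.prod_right_ae] with y hy
    exact (ofReal_integral_eq_lintegral_ofReal hy (ae_of_all _ (hf0 y))).symm
  set μ := volume.withDensity fun y => ENNReal.ofReal (h y)
  have hμ : ∀ y, μ (Iic y) = ENNReal.ofReal (F1c f y x * fX3 f x) := fun y => by
    rw [withDensity_apply _ measurableSet_Iic, ← ofReal_integral_eq_lintegral_ofReal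
      hh_int.integrableOn (ae_of_all _ fun y => integral_nonneg (hf0 y)), F1c,
      div_mul_cancel₀ _ hx.ne']
  have hs' : s ⊆ (fun y => F1c f y x * fX3 f x) ⁻¹' Icc (a * fX3 f x) (b * fX3 f x) :=
    fun y hy => ⟨mul_le_mul_of_nonneg_right (hs hy).1 hx.le,
      mul_le_mul_of_nonneg_right (hs hy).2 hx.le⟩
  calc ∫⁻ y in s, ∫⁻ t, ENNReal.ofReal (f x y t) = μ s := by
        rw [withDensity_apply']
        exact lintegral_congr_ae (ae_restrict_of_ae hinner)
    _ ≤ ENNReal.ofReal (b * fX3 f x - a * fX3 f x) :=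
        measure_le_ofReal_sub_of_cdf (hcont.mul continuous_const) hμ hs'
    _ = ENNReal.ofReal ((b - a) * fX3 f x) := by ring_nf

lemma withDensity_le_of_F1c_mem_Icc (f : ℝ → ℝ → ℝ → ℝ) {s0 s1 M : ℝ}
    (hf0 : ∀ x y t, 0 ≤ f x y t) (hsupp : ∀ x y t, x ∉ Ioo s0 s1 → f x y t = 0)
    (hfX : ∀ x ∈ Ioo s0 s1, 0 < fX3 f x ∧ fX3 f x ≤ M)
    (hcont : ∀ x ∈ Ioo s0 s1, Continuous fun y => F1c f y x)
    {S : Set (ℝ × ℝ × ℝ)} (hS : MeasurableSet S) {a b : ℝ} (hab : a ≤ b)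
    (hSab : ∀ p ∈ S, p.1 ∈ Ioo s0 s1 → F1c f p.2.1 p.1 ∈ Icc a b) :
    volume.withDensity (fun p : ℝ × ℝ × ℝ => ENNReal.ofReal (f p.1 p.2.1 p.2.2)) S
      ≤ ENNReal.ofReal ((b - a) * M) * volume (Ioo s0 s1) := by
  set φ := fun p : ℝ × ℝ × ℝ => ENNReal.ofReal (f p.1 p.2.1 p.2.2)
  -- `f` need not be measurable, so only the Tonelli inequality `lintegral_prod_le` is available
  have hslice : ∀ x, ∫⁻ y, ∫⁻ t, S.indicator φ (x, y, t)
      ≤ (Ioo s0 s1).indicator (fun _ => ENNReal.ofReal ((b - a) * M)) x := by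
    intro x
    by_cases hx : x ∈ Ioo s0 s1
    · set s := (fun y => F1c f y x) ⁻¹' Icc a b
      have hle : ∀ y, ∫⁻ t, S.indicator φ (x, y, t)
          ≤ s.indicator (fun y => ∫⁻ t, ENNReal.ofReal (f x y t)) y := fun y => by
        by_cases hy : y ∈ s
        · rw [indicator_of_mem hy]
          exact lintegral_mono fun t => indicator_le_self _ _ _
        · have : ∀ t, (x, y, t) ∉ S := fun t hmem => hy (hSab _ hmem hx)
          simp [indicator_of_notMem (this _)]
      rw [indicator_of_mem hx]
      calc _ ≤ ∫⁻ y, s.indicator (fun y => ∫⁻ t, ENNReal.ofReal (f x y t)) y := lintegral_mono hle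
        _ = ∫⁻ y in s, ∫⁻ t, ENNReal.ofReal (f x y t) :=
            lintegral_indicator ((hcont x hx).measurable measurableSet_Icc) _
        _ ≤ ENNReal.ofReal ((b - a) * fX3 f x) :=
            setLIntegral_lintegral_le_of_F1c f (hf0 x) (hfX x hx).1 (hcont x hx) subset_rfl
        _ ≤ _ := ENNReal.ofReal_le_ofReal
            (mul_le_mul_of_nonneg_left (hfX x hx).2 (sub_nonneg.mpr hab))
    · have h0 : ∀ y t, S.indicator φ (x, y, t) = 0 := fun y t =>
        indicator_apply_eq_zero.mpr fun _ => by simp [φ, hsupp x y t hx]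
      simp [h0, indicator_of_notMem hx]
  calc _ = ∫⁻ p, S.indicator φ p := by rw [withDensity_apply _ hS, lintegral_indicator hS]
    _ ≤ ∫⁻ x, ∫⁻ q : ℝ × ℝ, S.indicator φ (x, q) := by
        rw [Measure.volume_eq_prod]; exact lintegral_prod_le _
    _ ≤ ∫⁻ x, ∫⁻ y, ∫⁻ t, S.indicator φ (x, y, t) := lintegral_mono fun x => by
        rw [Measure.volume_eq_prod]; exact lintegral_prod_le _
    _ ≤ _ := (lintegral_mono hslice).trans_eq (lintegral_indicator_const measurableSet_Ioo _)

lemma ContinuousOn.exists_measurable_eqOn {α : Type*} [TopologicalSpace α] [MeasurableSpace α]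
    [OpensMeasurableSpace α] {g : α → ℝ} {s : Set α} (hg : ContinuousOn g s)
    (hs : MeasurableSet s) : ∃ W : α → ℝ, Measurable W ∧ EqOn W g s := by
  classical
  exact ⟨s.piecewise g 0, hg.measurable_piecewise continuousOn_const hs, piecewise_eqOn _ _ _⟩

lemma withDensity_map_swap (g : ℝ × ℝ × ℝ → ℝ≥0∞) :
    (volume.withDensity g).map (Prod.map id Prod.swap)
      = volume.withDensity (g ∘ Prod.map id Prod.swap) := by
  set e : ℝ × ℝ × ℝ ≃ᵐ ℝ × ℝ × ℝ := (MeasurableEquiv.refl ℝ).prodCongr MeasurableEquiv.prodComm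
  have he : MeasurePreserving e := by
    rw [Measure.volume_eq_prod, Measure.volume_eq_prod]
    exact (MeasurePreserving.id _).prod Measure.measurePreserving_swap
  ext s hs
  change (volume.withDensity g).map e s = volume.withDensity (g ∘ e) s
  rw [Measure.map_apply e.measurable hs, withDensity_apply _ (e.measurable hs),
    withDensity_apply _ hs, ← he.setLIntegral_comp_preimage_emb e.measurableEmbedding]
  rfl

section Margin

variable {Ω : Type*} [MeasurableSpace Ω] {P : Measure Ω} {X Y1 Y2 : ℕ → Ω → ℝ}
  {f : ℝ → ℝ → ℝ → ℝ} {s0 s1 : ℝ}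

lemma IIDLaw3.swap (hiid : IIDLaw3 P X Y1 Y2 f) : IIDLaw3 P X Y2 Y1 (fun x y t => f x t y) where
  measX := hiid.measX
  measY1 := hiid.measY2
  measY2 := hiid.measY1
  indep := hiid.indep.comp (fun _ => Prod.map id Prod.swap) fun _ => by fun_prop
  ident i := (hiid.ident i).comp (u := Prod.map id Prod.swap) (by fun_prop)
  law := by
    change Measure.map (Prod.map id Prod.swap ∘ fun ω => (X 0 ω, Y1 0 ω, Y2 0 ω)) P = _
    rw [← Measure.map_map (by fun_prop) ((hiid.measX 0).prodMk
      ((hiid.measY1 0).prodMk (hiid.measY2 0))), hiid.law, withDensity_map_swap]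
    rfl

lemma IIDLaw3.ae_mem_Ioo (hiid : IIDLaw3 P X Y1 Y2 f)
    (hsupp : ∀ x y t, x ∉ Ioo s0 s1 → f x y t = 0) : ∀ᵐ ω ∂P, ∀ i, X i ω ∈ Ioo s0 s1 := by
  have hT : Measurable fun ω => (X 0 ω, Y1 0 ω, Y2 0 ω) :=
    (hiid.measX 0).prodMk ((hiid.measY1 0).prodMk (hiid.measY2 0))
  have hS : MeasurableSet {p : ℝ × ℝ × ℝ | p.1 ∉ Ioo s0 s1} :=
    (measurableSet_Ioo.preimage measurable_fst).compl
  have h0 : P (X 0 ⁻¹' (Ioo s0 s1)ᶜ) = 0 := by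
    change P ((fun ω => (X 0 ω, Y1 0 ω, Y2 0 ω)) ⁻¹' {p | p.1 ∉ Ioo s0 s1}) = 0
    rw [← Measure.map_apply hT hS, hiid.law, withDensity_apply _ hS, ← lintegral_indicator hS]
    refine (lintegral_congr fun p => ?_).trans lintegral_zero
    exact indicator_apply_eq_zero.mpr fun hp => by simp [hsupp _ _ _ hp]
  refine ae_all_iff.mpr fun i => ae_iff.mpr ?_
  rw [← h0]
  exact ((hiid.ident i).comp measurable_fst).measure_mem_eq measurableSet_Ioo.compl

lemma IIDLaw3.measureReal_preimage_closedBall_le (hiid : IIDLaw3 P X Y1 Y2 f) {M : ℝ}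
    (hs : s0 < s1) (hf0 : ∀ x y t, 0 ≤ f x y t) (hsupp : ∀ x y t, x ∉ Ioo s0 s1 → f x y t = 0)
    (hfX : ∀ x ∈ Ioo s0 s1, 0 < fX3 f x ∧ fX3 f x ≤ M)
    (hcont : ∀ x ∈ Ioo s0 s1, Continuous fun y => F1c f y x)
    {W : ℝ × ℝ → ℝ} (hW : Measurable W) (hWF : ∀ y, ∀ x ∈ Ioo s0 s1, W (y, x) = F1c f y x)
    (w : ℝ) {r : ℝ} (hr : 0 ≤ r) :
    P.real ((fun ω => W (Y1 0 ω, X 0 ω)) ⁻¹' closedBall w r) ≤ M * (s1 - s0) * (2 * r) := by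
  have hT : Measurable fun ω => (X 0 ω, Y1 0 ω, Y2 0 ω) :=
    (hiid.measX 0).prodMk ((hiid.measY1 0).prodMk (hiid.measY2 0))
  set S := {p : ℝ × ℝ × ℝ | W (p.2.1, p.1) ∈ closedBall w r}
  have hS : MeasurableSet S :=
    (hW.comp (measurable_snd.fst.prodMk measurable_fst)) measurableSet_closedBall
  have hSab : ∀ p ∈ S, p.1 ∈ Ioo s0 s1 → F1c f p.2.1 p.1 ∈ Icc (w - r) (w + r) :=
    fun p hp hp1 => by rw [← Real.closedBall_eq_Icc, ← hWF _ _ hp1]; exact hp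
  have hM : 0 ≤ M := by
    obtain ⟨h1, h2⟩ := hfX ((s0 + s1) / 2) ⟨by linarith, by linarith⟩
    linarith
  refine ENNReal.toReal_le_of_le_ofReal (by positivity) ?_
  change P ((fun ω => (X 0 ω, Y1 0 ω, Y2 0 ω)) ⁻¹' S) ≤ _
  rw [← Measure.map_apply hT hS, hiid.law]
  refine (withDensity_le_of_F1c_mem_Icc f hf0 hsupp hfX hcont hS (by linarith) hSab).trans_eq ?_
  rw [Real.volume_Ioo, ← ENNReal.ofReal_mul (by nlinarith)]
  ring_nf

theorem IIDLaw3.tendsto_measure_exists_lt_abs_Ghat_sub [IsProbabilityMeasure P] {M : ℝ}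
    (hiid : IIDLaw3 P X Y1 Y2 f) (hs : s0 < s1) (hf0 : ∀ x y t, 0 ≤ f x y t)
    (hsupp : ∀ x y t, x ∉ Ioo s0 s1 → f x y t = 0)
    (hfX : ∀ x ∈ Ioo s0 s1, 0 < fX3 f x ∧ fX3 f x ≤ M)
    (hcont : ContinuousOn (fun q : ℝ × ℝ => F1c f q.1 q.2) (univ ×ˢ Ioo s0 s1))
    {Fh : ℕ → ℝ → ℝ → Ω → ℝ} (hH2 : CondH2 P s0 s1 (F1c f) Fh) {ε : ℝ} (hε : 0 < ε) :
    Tendsto (fun n : ℕ => P {ω | ∃ u ∈ Icc (0 : ℝ) 1, ε * (n : ℝ) ^ (-(1 / 4) : ℝ) <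
      |Ghat Fh X Y1 n u ω - Ghat (fun _ y x _ => F1c f y x) X Y1 n u ω|}) atTop (𝓝 0) := by
  obtain ⟨W, hW, hWF⟩ := hcont.exists_measurable_eqOn (MeasurableSet.univ.prod measurableSet_Ioo)
  have hWF' : ∀ y, ∀ x ∈ Ioo s0 s1, W (y, x) = F1c f y x := fun y x hx => hWF ⟨mem_univ y, hx⟩
  have hcont' : ∀ x ∈ Ioo s0 s1, Continuous fun y => F1c f y x := fun x hx =>
    continuousOn_univ.mp (hcont.comp (continuous_id.prodMk continuous_const).continuousOn
      fun y _ => ⟨mem_univ y, hx⟩)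
  have hg : Measurable fun p : ℝ × ℝ × ℝ => W (p.2.1, p.1) :=
    hW.comp (measurable_snd.fst.prodMk measurable_fst)
  set Z : ℕ → Ω → ℝ := fun i ω => W (Y1 i ω, X i ω)
  have hgood : ∀ᵐ ω ∂P, ∀ i, X i ω ∈ Ioo s0 s1 ∧ Z i ω = F1c f (Y1 i ω) (X i ω) :=
    (hiid.ae_mem_Ioo hsupp).mono fun ω h i => ⟨h i, hWF' _ _ (h i)⟩
  have hclose : ∀ ε > 0, Tendsto (fun n : ℕ => P {ω | ∃ i < n,
      ε * (n : ℝ) ^ (-(1 / 4) : ℝ) < |Fh n (Y1 i ω) (X i ω) ω - Z i ω|}) atTop (𝓝 0) :=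
    fun ε hε => tendsto_of_tendsto_of_tendsto_of_le_of_le tendsto_const_nhds (hH2 ε hε)
      (fun _ => zero_le) fun n => measure_mono_ae <| hgood.mono fun ω h ⟨i, _, hi⟩ =>
        ⟨X i ω, (h i).1, Y1 i ω, (h i).2 ▸ hi⟩
  have hL : 0 < M * (s1 - s0) := by
    obtain ⟨h1, h2⟩ := hfX ((s0 + s1) / 2) ⟨by linarith, by linarith⟩
    exact mul_pos (h1.trans_le h2) (by linarith)
  refine (tendsto_measure_exists_lt_abs_empCDF_sub (Z := Z)
    (fun i => hg.comp ((hiid.measX i).prodMk ((hiid.measY1 i).prodMk (hiid.measY2 i))))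
    (hiid.indep.comp _ fun _ => hg)
    (fun i => (hiid.ident i).comp hg) hL
    (fun w r hr => hiid.measureReal_preimage_closedBall_le hs hf0 hsupp hfX hcont' hW hWF' w hr)
    hclose hε).congr fun n => measure_congr ?_
  filter_upwards [hgood] with ω h
  have hZ : (fun i => F1c f (Y1 i ω) (X i ω)) = fun i => Z i ω := funext fun i => (h i).2.symm
  change (∃ u ∈ _, _) = ∃ u ∈ _, _
  simp only [Ghat_eq_empCDF, hZ]

end Margin

lemma fX3_swap (f : ℝ → ℝ → ℝ → ℝ) : fX3 (fun x y t => f x t y) = fX3 f := by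
  funext x
  simp only [fX3, Measure.volume_eq_prod]
  exact integral_prod_swap fun q : ℝ × ℝ => f x q.1 q.2

lemma F1c_swap (f : ℝ → ℝ → ℝ → ℝ) : F1c (fun x y t => f x t y) = F2c f := by
  funext y x
  rw [F1c, F2c, fX3_swap]

lemma CondG1T.fX3_mem_Ioc {fXY : ℝ → ℝ → ℝ → ℝ} {s0 s1 b M δ : ℝ}
    (hG1 : CondG1T fXY s0 s1 b M δ) : ∀ x ∈ Ioo s0 s1, 0 < fX3 fXY x ∧ fX3 fXY x ≤ M :=
  fun x hx => ⟨hG1.hb.trans_le (hG1.fXlb x hx), (le_abs_self _).trans <| by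
    simpa using hG1.fXreg.2.1 0 (Nat.zero_le _) x hx⟩

theorem stmt18_general
    {Ω : Type*} [MeasurableSpace Ω] (P : Measure Ω) [IsProbabilityMeasure P]
    (X Y1 Y2 : ℕ → Ω → ℝ) (fXY : ℝ → ℝ → ℝ → ℝ) (s0 s1 b M δ : ℝ)
    (hG1 : CondG1T fXY s0 s1 b M δ) (hiid : IIDLaw3 P X Y1 Y2 fXY)
    (Fh1 Fh2 : ℕ → ℝ → ℝ → Ω → ℝ)
    (hH2₁ : CondH2 P s0 s1 (F1c fXY) Fh1) (hH2₂ : CondH2 P s0 s1 (F2c fXY) Fh2) :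
    ∀ γ ∈ Set.Ioo (0 : ℝ) (1 / 2), ∀ ε > (0 : ℝ),
      Tendsto (fun n : ℕ => P {ω | ∃ u ∈ Set.Icc γ (1 - γ),
          ε * (n : ℝ) ^ (-(1 / 4) : ℝ) <
            |Ghat Fh1 X Y1 n u ω - Ghat (fun _ y x _ => F1c fXY y x) X Y1 n u ω|})
        atTop (𝓝 0) ∧
      Tendsto (fun n : ℕ => P {ω | ∃ u ∈ Set.Icc γ (1 - γ),
          ε * (n : ℝ) ^ (-(1 / 4) : ℝ) <
            |Ghat Fh2 X Y2 n u ω - Ghat (fun _ y x _ => F2c fXY y x) X Y2 n u ω|})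
        atTop (𝓝 0) := by
  intro γ hγ ε hε
  have restrict : ∀ {G : ℕ → ℝ → Ω → ℝ},
      Tendsto (fun n : ℕ => P {ω | ∃ u ∈ Icc (0 : ℝ) 1, ε * (n : ℝ) ^ (-(1 / 4) : ℝ) < |G n u ω|})
        atTop (𝓝 0) →
      Tendsto (fun n : ℕ => P {ω | ∃ u ∈ Icc γ (1 - γ), ε * (n : ℝ) ^ (-(1 / 4) : ℝ) < |G n u ω|})
        atTop (𝓝 0) := fun h =>
    tendsto_of_tendsto_of_tendsto_of_le_of_le tendsto_const_nhds h (fun _ => zero_le) fun _ =>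
      measure_mono fun _ ⟨u, hu, hlt⟩ =>
        ⟨u, Icc_subset_Icc hγ.1.le (by linarith [hγ.1]) hu, hlt⟩
  have hfX := hG1.fX3_mem_Ioc
  refine ⟨restrict (hiid.tendsto_measure_exists_lt_abs_Ghat_sub hG1.hs hG1.nonneg hG1.supp hfX
    hG1.F1reg.1.continuousOn hH2₁ hε), restrict ?_⟩
  rw [← fX3_swap] at hfX
  rw [← F1c_swap] at hH2₂ ⊢
  exact hiid.swap.tendsto_measure_exists_lt_abs_Ghat_sub hG1.hs (fun x y t => hG1.nonneg x t y)
    (fun x y t => hG1.supp x t y) hfX (by rw [F1c_swap]; exact hG1.F2reg.1.continuousOn) hH2₂ hε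

/-- Fact 3: under (G1), (H1), (H2), (H3), for each margin
`j` and each `γ ∈ (0,1/2)`,
`sup_{u ∈ [γ,1-γ]} |Ĝ_{n,j}(u) - Ĝ^{(or)}_{n,j}(u)| = o_P(n^{-1/4})`. -/
theorem stmt18
    {Ω : Type*} [MeasurableSpace Ω] (P : Measure Ω) [IsProbabilityMeasure P]
    (X Y1 Y2 : ℕ → Ω → ℝ) (fXY : ℝ → ℝ → ℝ → ℝ) (s0 s1 b M δ : ℝ)
    (hG1 : CondG1T fXY s0 s1 b M δ) (hiid : IIDLaw3 P X Y1 Y2 fXY)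
    (Fh1 Fh2 : ℕ → ℝ → ℝ → Ω → ℝ)
    (hFh1meas : ∀ n, Measurable fun p : ℝ × ℝ × Ω => Fh1 n p.1 p.2.1 p.2.2)
    (hFh2meas : ∀ n, Measurable fun p : ℝ × ℝ × Ω => Fh2 n p.1 p.2.1 p.2.2)
    (hH1₁ : CondH1 P s0 s1 (F1c fXY) Fh1) (hH1₂ : CondH1 P s0 s1 (F2c fXY) Fh2)
    (hH2₁ : CondH2 P s0 s1 (F1c fXY) Fh1) (hH2₂ : CondH2 P s0 s1 (F2c fXY) Fh2)
    (hH3₁ : CondH3 P s0 s1 Fh1) (hH3₂ : CondH3 P s0 s1 Fh2) :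
    ∀ γ ∈ Set.Ioo (0 : ℝ) (1 / 2), ∀ ε > (0 : ℝ),
      Tendsto (fun n : ℕ => P {ω | ∃ u ∈ Set.Icc γ (1 - γ),
          ε * (n : ℝ) ^ (-(1 / 4) : ℝ) <
            |Ghat Fh1 X Y1 n u ω - Ghat (fun _ y x _ => F1c fXY y x) X Y1 n u ω|})
        atTop (𝓝 0) ∧
      Tendsto (fun n : ℕ => P {ω | ∃ u ∈ Set.Icc γ (1 - γ),
          ε * (n : ℝ) ^ (-(1 / 4) : ℝ) <
            |Ghat Fh2 X Y2 n u ω - Ghat (fun _ y x _ => F2c fXY y x) X Y2 n u ω|})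
        atTop (𝓝 0) :=
  stmt18_general P X Y1 Y2 fXY s0 s1 b M δ hG1 hiid Fh1 Fh2 hH2₁ hH2₂
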